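/- Let (Y, 𝒟, ν) be a probability space, 𝒞 ⊆ 𝒟 a sub-σ-algebra, α a finite measurable partition of Y, and let a group G act on Y by invertible measurable (not necessarily measure-preserving) transformations. For nonempty finite E, F ⊆ G, writing α_S = ⋁_{g∈S} g⁻¹α, one has H_ν(α_F | 𝒞) ≤ ∑_{g∈F} (1/|E|)·H_ν(α_{Eg} | 𝒞) + |F \ {g ∈ G : E⁻¹g ⊆ F}|·log|α|. -/

import Mathlib

open MeasureTheory MeasurableSpace

/-- Conditional Shannon entropy `H_ν(f | m)` of a finite measurable partition of `Y`
(encoded as a map `f : Y → A` into a finite type, the atoms being the fibers),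
given a sub-σ-algebra `m`, with respect to the measure `ν`. -/
noncomputable def condEnt {Y A : Type*} [Fintype A] {m0 : MeasurableSpace Y}
    (ν : Measure Y) (m : MeasurableSpace Y) (f : Y → A) : ℝ :=
  ∑ a : A, ∫ y, Real.negMulLog
    ((MeasureTheory.condExp m ν (Set.indicator (f ⁻¹' {a}) (fun _ => (1 : ℝ)))) y) ∂ν

/-- The join `α_S = ⋁_{g∈S} g⁻¹α` of the pullbacks of the partition `α` under the
elements of the finite set `S ⊆ G`, encoded as a map into `S → A`. -/
def joinMap {G Y A : Type*} [Group G] [MulAction G Y] (α : Y → A) (S : Finset G) :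
    Y → (S → A) := fun y s => α (s.1 • y)

/-!
`S ↦ H_ν(α_S | 𝒞)` is a polymatroid on finite subsets of `G`: it vanishes at `∅`, is monotone,
and is submodular, the last being strong subadditivity of Shannon entropy applied to the
conditional distributions `ν(· | 𝒞)(y)` pointwise and integrated. Each `x` in
`F' = {g ∈ F | E⁻¹g ⊆ F}` lies in `Eg` for the `|E|` elements `g = e⁻¹x ∈ F`, so Shearer's
inequality gives `|E| H(α_{F'}) ≤ ∑_{g ∈ F} H(α_{Eg})`, and adding the remaining `|F \ F'|`
pullbacks costs at most `log |α|` each.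
-/

open Finset Real

section Finite

variable {D B : Type*} [Fintype D]

noncomputable def entropy (p : D → ℝ) : ℝ := ∑ d, negMulLog (p d)

def fiberSum [DecidableEq B] (f : D → B) (p : D → ℝ) (b : B) : ℝ := ∑ d with f d = b, p d

lemma negMulLog_add_mul_log_le {u v : ℝ} (hu : 0 ≤ u) (hv : 0 ≤ v) (huv : 0 < u → 0 < v) :
    negMulLog u + u * log v ≤ v - u := by
  rcases hu.eq_or_lt with rfl | hu
  · simpa using hv
  have hv := huv hu
  calc negMulLog u + u * log v = u * log (v / u) := by
        rw [log_div hv.ne' hu.ne', negMulLog]; ring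
    _ ≤ u * (v / u - 1) := mul_le_mul_of_nonneg_left (log_le_sub_one_of_pos (by positivity)) hu.le
    _ = v - u := by field_simp

/-- Gibbs' inequality. -/
lemma entropy_le_neg_sum_mul_log {p v : D → ℝ} (hp : 0 ≤ p) (hv : 0 ≤ v)
    (hpv : ∀ d, 0 < p d → 0 < v d) (hsum : ∑ d, v d ≤ ∑ d, p d) :
    entropy p ≤ -∑ d, p d * log (v d) := by
  have key : ∑ d, (negMulLog (p d) + p d * log (v d)) ≤ ∑ d, (v d - p d) :=
    sum_le_sum fun d _ => negMulLog_add_mul_log_le (hp d) (hv d) (hpv d)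
  rw [sum_add_distrib, sum_sub_distrib] at key
  rw [entropy]
  linarith

lemma entropy_le_log_card {p : D → ℝ} (hp : 0 ≤ p) (hsum : ∑ d, p d = 1) :
    entropy p ≤ log (Fintype.card D) := by
  have hD : Nonempty D := by
    by_contra h
    rw [not_nonempty_iff] at h
    simp at hsum
  have hcard : (0 : ℝ) < Fintype.card D := by exact_mod_cast Fintype.card_pos
  have hv : ∑ _d : D, (Fintype.card D : ℝ)⁻¹ ≤ ∑ d, p d := by
    simp [hsum, hcard.ne']
  calc entropy p ≤ -∑ d, p d * log (Fintype.card D : ℝ)⁻¹ :=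
        entropy_le_neg_sum_mul_log hp (fun _ => by positivity) (fun _ _ => by positivity) hv
    _ = log (Fintype.card D) := by rw [← sum_mul, hsum, log_inv]; ring

lemma negMulLog_sum_le {ι : Type*} (t : Finset ι) {q : ι → ℝ} (hq : ∀ i ∈ t, 0 ≤ q i) :
    negMulLog (∑ i ∈ t, q i) ≤ ∑ i ∈ t, negMulLog (q i) := by
  rw [negMulLog, neg_mul, sum_mul, ← sum_neg_distrib]
  refine sum_le_sum fun i hi => ?_
  rcases (hq i hi).eq_or_lt with h | h
  · simp [← h]
  rw [negMulLog, neg_mul, neg_le_neg_iff]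
  exact mul_le_mul_of_nonneg_left (log_le_log h (single_le_sum hq hi)) h.le

variable [DecidableEq B] {f : D → B} {p : D → ℝ}

lemma fiberSum_nonneg (hp : 0 ≤ p) : 0 ≤ fiberSum f p :=
  fun _ => sum_nonneg fun d _ => hp d

lemma le_fiberSum_apply (hp : 0 ≤ p) (d : D) : p d ≤ fiberSum f p (f d) :=
  single_le_sum (fun d _ => hp d) (by simp)

lemma sum_fiberSum [Fintype B] (f : D → B) (p : D → ℝ) : ∑ b, fiberSum f p b = ∑ d, p d :=
  sum_fiberwise univ f p

lemma entropy_fiberSum_le [Fintype B] (hp : 0 ≤ p) : entropy (fiberSum f p) ≤ entropy p := by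
  rw [entropy, entropy, ← sum_fiberwise univ f]
  exact sum_le_sum fun b _ => negMulLog_sum_le _ fun d _ => hp d

lemma entropy_fiberSum [Fintype B] (f : D → B) (p : D → ℝ) :
    entropy (fiberSum f p) = -∑ d, p d * log (fiberSum f p (f d)) := by
  rw [entropy, ← sum_fiberwise univ f, ← sum_neg_distrib]
  refine sum_congr rfl fun b _ => ?_
  rw [negMulLog, neg_mul, fiberSum, sum_mul]
  congr 1
  exact sum_congr rfl fun d hd => by rw [(mem_filter.1 hd).2, fiberSum]

/-- Strong subadditivity `H(X, Z) + H(φ Z) ≤ H(X, φ Z) + H(Z)` for a joint law `q` of `(X, Z)`. -/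
lemma entropy_add_entropy_fiberSum_le {A C : Type*} [Fintype A] [Fintype C] [Fintype B]
    [DecidableEq A] [DecidableEq C]
    {q : A × C → ℝ} (hq : 0 ≤ q) (φ : C → B) :
    entropy q + entropy (fiberSum (φ ∘ Prod.snd) q)
      ≤ entropy (fiberSum (Prod.map id φ) q) + entropy (fiberSum Prod.snd q) := by
  set s := fiberSum Prod.snd q
  set R := fiberSum (Prod.map id φ) q
  set Q := fiberSum (φ ∘ Prod.snd) q
  have hRQ : ∀ b, ∑ a, R (a, b) = Q b := by
    intro b
    simp only [R, Q, fiberSum, sum_filter]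
    rw [sum_comm]
    refine sum_congr rfl fun x _ => ?_
    simp [Prod.ext_iff, ite_and, eq_comm]
  -- Gibbs against `v`, the law of `(X, Z)` making `X` and `Z` independent given `φ Z`
  set v : A × C → ℝ := fun x => s x.2 * R (Prod.map id φ x) / Q ((φ ∘ Prod.snd) x)
  have hv : 0 ≤ v := fun x => div_nonneg (mul_nonneg (fiberSum_nonneg hq _)
    (fiberSum_nonneg hq _)) (fiberSum_nonneg hq _)
  have hpos : ∀ x, 0 < q x → 0 < s x.2 ∧ 0 < R (Prod.map id φ x) ∧ 0 < Q ((φ ∘ Prod.snd) x) :=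
    fun x hx => ⟨hx.trans_le (le_fiberSum_apply hq x), hx.trans_le (le_fiberSum_apply hq x),
      hx.trans_le (le_fiberSum_apply hq x)⟩
  have hsum : ∑ x, v x ≤ ∑ x, q x := by
    calc ∑ x, v x = ∑ c, s c * (Q (φ c) / Q (φ c)) := by
          rw [Fintype.sum_prod_type_right]
          refine sum_congr rfl fun c _ => ?_
          simp only [v, Prod.map_apply, id, Function.comp_apply]
          rw [← sum_div, ← mul_sum, hRQ, mul_div_assoc]
      _ ≤ ∑ c, s c := sum_le_sum fun c _ =>
          mul_le_of_le_one_right (fiberSum_nonneg hq c) (div_self_le_one _)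
      _ = ∑ x, q x := sum_fiberSum _ _
  have hlog : ∀ x, q x * log (v x) = q x * log (s x.2) + q x * log (R (Prod.map id φ x))
      - q x * log (Q ((φ ∘ Prod.snd) x)) := by
    intro x
    rcases (hq x).eq_or_lt with h | h
    · simp [← h]
    obtain ⟨hs, hR, hQ⟩ := hpos x h
    simp only [v]
    rw [log_div (by positivity) hQ.ne', log_mul hs.ne' hR.ne']
    ring
  have gibbs := entropy_le_neg_sum_mul_log hq hv (fun x hx => by
    obtain ⟨hs, hR, hQ⟩ := hpos x hx; positivity) hsum
  simp only [hlog, sum_sub_distrib, sum_add_distrib] at gibbs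
  rw [entropy_fiberSum, entropy_fiberSum, entropy_fiberSum]
  linarith

end Finite

section Conditional

noncomputable def condProb {Y A : Type*} (m : MeasurableSpace Y) [MeasurableSpace Y]
    (ν : Measure Y) (f : Y → A) (a : A) : Y → ℝ :=
  condExp m ν (Set.indicator (f ⁻¹' {a}) (fun _ => (1 : ℝ)))

variable {Y A B : Type*} {m : MeasurableSpace Y} [mY : MeasurableSpace Y] {ν : Measure Y}
  {f : Y → A}

lemma measurableSet_comp_preimage_singleton [Countable A] (hf : ∀ a, MeasurableSet (f ⁻¹' {a}))
    (g : A → B) (b : B) : MeasurableSet ((g ∘ f) ⁻¹' {b}) := by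
  rw [Set.preimage_comp, ← Set.biUnion_preimage_singleton]
  exact .biUnion (Set.to_countable _) fun a _ => hf a

lemma condProb_nonneg (a : A) : ∀ᵐ y ∂ν, 0 ≤ condProb m ν f a y :=
  condExp_nonneg (ae_of_all _ fun _ => Set.indicator_nonneg (fun _ _ => zero_le_one) _)

lemma condProb_le_one [IsFiniteMeasure ν] (hm : m ≤ mY) {a : A}
    (hfa : MeasurableSet (f ⁻¹' {a})) :
    ∀ᵐ y ∂ν, condProb m ν f a y ≤ 1 := by
  have h := condExp_mono (m := m) (μ := ν) ((integrable_const (1 : ℝ)).indicator hfa)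
    (integrable_const (1 : ℝ)) (ae_of_all _ (Set.indicator_le_self' fun _ _ => zero_le_one))
  rwa [condExp_const hm] at h

lemma condProb_of_subsingleton [IsFiniteMeasure ν] (hm : m ≤ mY) [Subsingleton A] (a : A) :
    condProb m ν f a = 1 := by
  have : f ⁻¹' {a} = Set.univ := Set.eq_univ_of_forall fun y => Subsingleton.elim (f y) a
  rw [condProb, this, Set.indicator_univ, condExp_const hm]
  rfl

lemma condProb_comp [IsFiniteMeasure ν] [Fintype A] [Finite B] [DecidableEq B]
    (hf : ∀ a, MeasurableSet (f ⁻¹' {a})) (g : A → B) :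
    ∀ᵐ y ∂ν, ∀ b, condProb m ν (g ∘ f) b y = fiberSum g (fun a => condProb m ν f a y) b := by
  refine ae_all_iff.2 fun b => ?_
  have hind : Set.indicator ((g ∘ f) ⁻¹' {b}) (fun _ => (1 : ℝ))
      = ∑ a with g a = b, Set.indicator (f ⁻¹' {a}) (fun _ => 1) := by
    classical
    ext y
    simp only [Finset.sum_apply, Set.indicator_apply, Set.mem_preimage, Set.mem_singleton_iff,
      Function.comp_apply]
    rw [Finset.sum_ite_eq]
    simp
  have hsum := condExp_finsetSum (μ := ν) (s := {a | g a = b})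
    (fun a _ => (integrable_const (1 : ℝ)).indicator (hf a)) m
  rw [← hind] at hsum
  filter_upwards [hsum] with y hy
  rw [condProb, hy, Finset.sum_apply]
  rfl

lemma sum_condProb [IsFiniteMeasure ν] (hm : m ≤ mY) [Fintype A]
    (hf : ∀ a, MeasurableSet (f ⁻¹' {a})) :
    ∀ᵐ y ∂ν, ∑ a, condProb m ν f a y = 1 := by
  filter_upwards [condProb_comp (m := m) hf (fun _ => ())] with y hy
  simpa [fiberSum, condProb_of_subsingleton hm] using (hy ()).symm

lemma integrable_negMulLog_condProb [IsFiniteMeasure ν] (hm : m ≤ mY) {a : A}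
    (hfa : MeasurableSet (f ⁻¹' {a})) :
    Integrable (fun y => negMulLog (condProb m ν f a y)) ν := by
  refine (integrable_const (1 : ℝ)).mono'
    (continuous_negMulLog.comp_aestronglyMeasurable
      (stronglyMeasurable_condExp.mono hm).aestronglyMeasurable) ?_
  filter_upwards [condProb_nonneg a, condProb_le_one hm hfa] with y h0 h1
  rw [Real.norm_eq_abs, abs_of_nonneg (negMulLog_nonneg h0 h1)]
  linarith [negMulLog_le_one_sub_self h0]

lemma integrable_entropy_condProb [IsFiniteMeasure ν] (hm : m ≤ mY) [Fintype A]
    (hf : ∀ a, MeasurableSet (f ⁻¹' {a})) :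
    Integrable (fun y => entropy fun a => condProb m ν f a y) ν :=
  integrable_finsetSum _ fun a _ => integrable_negMulLog_condProb hm (hf a)

lemma condEnt_eq_integral_entropy [IsFiniteMeasure ν] (hm : m ≤ mY) [Fintype A]
    (hf : ∀ a, MeasurableSet (f ⁻¹' {a})) :
    condEnt ν m f = ∫ y, entropy (fun a => condProb m ν f a y) ∂ν :=
  (integral_finsetSum _ fun a _ => integrable_negMulLog_condProb hm (hf a)).symm

lemma condEnt_of_subsingleton [IsFiniteMeasure ν] (hm : m ≤ mY) [Fintype A] [Subsingleton A] :
    condEnt ν m f = 0 := by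
  change ∑ a, ∫ y, negMulLog (condProb m ν f a y) ∂ν = 0
  simp [condProb_of_subsingleton hm]

lemma condEnt_le_log_card [IsProbabilityMeasure ν] (hm : m ≤ mY) [Fintype A]
    (hf : ∀ a, MeasurableSet (f ⁻¹' {a})) :
    condEnt ν m f ≤ log (Fintype.card A) := by
  rw [condEnt_eq_integral_entropy hm hf]
  calc ∫ y, entropy (fun a => condProb m ν f a y) ∂ν ≤ ∫ _, log (Fintype.card A) ∂ν := by
        refine integral_mono_ae (integrable_entropy_condProb hm hf) (integrable_const _) ?_
        filter_upwards [ae_all_iff.2 fun a => condProb_nonneg (m := m) (ν := ν) (f := f) a,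
          sum_condProb hm hf] with y h0 h1
        exact entropy_le_log_card h0 h1
    _ = log (Fintype.card A) := by simp

lemma condEnt_comp_le [IsFiniteMeasure ν] (hm : m ≤ mY) [Fintype A] [Fintype B]
    (hf : ∀ a, MeasurableSet (f ⁻¹' {a})) (g : A → B) :
    condEnt ν m (g ∘ f) ≤ condEnt ν m f := by
  classical
  have hgf := measurableSet_comp_preimage_singleton hf g
  rw [condEnt_eq_integral_entropy hm hgf, condEnt_eq_integral_entropy hm hf]
  refine integral_mono_ae (integrable_entropy_condProb hm hgf)
    (integrable_entropy_condProb hm hf) ?_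
  filter_upwards [condProb_comp (m := m) hf g,
    ae_all_iff.2 fun a => condProb_nonneg (m := m) (ν := ν) (f := f) a]
    with y hy h0
  simp only [hy]
  exact entropy_fiberSum_le h0

lemma condEnt_comp_eq [IsFiniteMeasure ν] (hm : m ≤ mY) [Fintype A] [Fintype B]
    (hf : ∀ a, MeasurableSet (f ⁻¹' {a})) {g : A → B} {ψ : B → A} (hψ : ψ ∘ g ∘ f = f) :
    condEnt ν m (g ∘ f) = condEnt ν m f := by
  refine le_antisymm (condEnt_comp_le hm hf g) ?_
  conv_lhs => rw [← hψ]
  exact condEnt_comp_le hm (measurableSet_comp_preimage_singleton hf g) ψ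

/-- Strong subadditivity `H(X, Z | m) + H(φ Z | m) ≤ H(X, φ Z | m) + H(Z | m)` for `P = (X, Z)`. -/
lemma condEnt_add_condEnt_le [IsFiniteMeasure ν] (hm : m ≤ mY) {C : Type*} [Fintype A]
    [Fintype B] [Fintype C] {P : Y → A × C} (hP : ∀ x, MeasurableSet (P ⁻¹' {x})) (φ : C → B) :
    condEnt ν m P + condEnt ν m ((φ ∘ Prod.snd) ∘ P)
      ≤ condEnt ν m (Prod.map id φ ∘ P) + condEnt ν m (Prod.snd ∘ P) := by
  classical
  have hZ := measurableSet_comp_preimage_singleton hP (Prod.snd : A × C → C)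
  have hφZ := measurableSet_comp_preimage_singleton hP (φ ∘ Prod.snd)
  have hXφZ := measurableSet_comp_preimage_singleton hP (Prod.map id φ)
  rw [condEnt_eq_integral_entropy hm hP, condEnt_eq_integral_entropy hm hφZ,
    condEnt_eq_integral_entropy hm hXφZ, condEnt_eq_integral_entropy hm hZ,
    ← integral_add (integrable_entropy_condProb hm hP) (integrable_entropy_condProb hm hφZ),
    ← integral_add (integrable_entropy_condProb hm hXφZ) (integrable_entropy_condProb hm hZ)]
  refine integral_mono_ae
    ((integrable_entropy_condProb hm hP).add (integrable_entropy_condProb hm hφZ))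
    ((integrable_entropy_condProb hm hXφZ).add (integrable_entropy_condProb hm hZ)) ?_
  filter_upwards [condProb_comp (m := m) hP (φ ∘ Prod.snd),
    condProb_comp (m := m) hP (Prod.map id φ), condProb_comp (m := m) hP Prod.snd,
    ae_all_iff.2 fun x => condProb_nonneg (m := m) (ν := ν) (f := P) x] with y h1 h2 h3 h0
  simp only [h1, h2, h3]
  exact entropy_add_entropy_fiberSum_le h0 φ

end Conditional

section Polymatroid

variable {ι : Type*} [DecidableEq ι]

structure IsPolymatroid (h : Finset ι → ℝ) : Prop where
  map_empty : h ∅ = 0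
  mono : Monotone h
  diminishing_returns ⦃i : ι⦄ ⦃S T : Finset ι⦄ (hTS : T ⊆ S) :
    h (insert i S) - h S ≤ h (insert i T) - h T

namespace IsPolymatroid

variable {h : Finset ι → ℝ}

lemma insert_le (hh : IsPolymatroid h) (i : ι) (S : Finset ι) : h (insert i S) ≤ h S + h {i} := by
  have := hh.diminishing_returns (i := i) (empty_subset S)
  rw [insert_empty, hh.map_empty] at this
  linarith

lemma union_le_add_card_mul (hh : IsPolymatroid h) {c : ℝ} (T V : Finset ι)
    (hc : ∀ i ∈ V, h {i} ≤ c) : h (T ∪ V) ≤ h T + #V * c := by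
  induction V using Finset.induction_on with
  | empty => simp
  | insert i V hi ih =>
    rw [union_insert, card_insert_of_notMem hi]
    have := hh.insert_le i (T ∪ V)
    have := ih fun j hj => hc j (mem_insert_of_mem hj)
    have := hc i (mem_insert_self i V)
    push_cast
    linarith

lemma card_mul_le_sum_inter (hh : IsPolymatroid h) {κ : Type*} (I : Finset κ)
    (S : κ → Finset ι) {k : ℕ} (U : Finset ι) (hcov : ∀ x ∈ U, k ≤ #{g ∈ I | x ∈ S g}) :
    k * h U ≤ ∑ g ∈ I, h (S g ∩ U) := by
  induction U using Finset.induction_on with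
  | empty => simp [hh.map_empty]
  | insert x U hx ih =>
    set Δ := h (insert x U) - h U
    have hΔ : 0 ≤ Δ := sub_nonneg.2 (hh.mono (subset_insert x U))
    have hstep : ∀ g, h (S g ∩ U) + (if x ∈ S g then Δ else 0) ≤ h (S g ∩ insert x U) := by
      intro g
      split_ifs with hxg
      · rw [inter_insert_of_mem hxg]
        linarith [hh.diminishing_returns (i := x) (inter_subset_right : S g ∩ U ⊆ U)]
      · rw [inter_insert_of_notMem hxg, add_zero]
    have hk : (k : ℝ) ≤ #{g ∈ I | x ∈ S g} := by exact_mod_cast hcov x (mem_insert_self x U)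
    calc k * h (insert x U) = k * h U + k * Δ := by ring
      _ ≤ ∑ g ∈ I, h (S g ∩ U) + #{g ∈ I | x ∈ S g} * Δ :=
          add_le_add (ih fun y hy => hcov y (mem_insert_of_mem hy))
            (mul_le_mul_of_nonneg_right hk hΔ)
      _ = ∑ g ∈ I, (h (S g ∩ U) + if x ∈ S g then Δ else 0) := by
          rw [sum_add_distrib, ← sum_filter, sum_const, nsmul_eq_mul]
      _ ≤ ∑ g ∈ I, h (S g ∩ insert x U) := sum_le_sum fun g _ => hstep g

/-- Shearer's inequality. -/
lemma card_mul_le_sum (hh : IsPolymatroid h) {κ : Type*} (I : Finset κ) (S : κ → Finset ι)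
    {k : ℕ} (U : Finset ι) (hcov : ∀ x ∈ U, k ≤ #{g ∈ I | x ∈ S g}) :
    k * h U ≤ ∑ g ∈ I, h (S g) :=
  (hh.card_mul_le_sum_inter I S U hcov).trans (sum_le_sum fun _ _ => hh.mono inter_subset_left)

end IsPolymatroid

end Polymatroid

section Join

def joinFamily {Y ι A : Type*} (f : ι → Y → A) (S : Finset ι) : Y → S → A := fun y i => f i y

variable {Y ι A : Type*} {m : MeasurableSpace Y} [mY : MeasurableSpace Y] {ν : Measure Y}
  {f : ι → Y → A}

lemma measurableSet_joinFamily_preimage (hf : ∀ i a, MeasurableSet (f i ⁻¹' {a}))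
    (S : Finset ι) (p : S → A) : MeasurableSet (joinFamily f S ⁻¹' {p}) := by
  have : joinFamily f S ⁻¹' {p} = ⋂ i : S, f i ⁻¹' {p i} := by
    ext y
    simp [joinFamily, funext_iff]
  rw [this]
  exact .iInter fun i => hf i (p i)

variable [DecidableEq ι] [Fintype A]

lemma condEnt_joinFamily_insert [IsFiniteMeasure ν] (hm : m ≤ mY)
    (hf : ∀ i a, MeasurableSet (f i ⁻¹' {a})) (i : ι) (S : Finset ι) :
    condEnt ν m (joinFamily f (insert i S)) = condEnt ν m (fun y => (f i y, joinFamily f S y)) := by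
  refine (condEnt_comp_eq hm (measurableSet_joinFamily_preimage hf _)
    (g := fun p : ↥(insert i S) → A =>
      (p ⟨i, mem_insert_self i S⟩, fun j : S => p ⟨j, mem_insert_of_mem j.2⟩))
    (ψ := fun p j => if hj : j.1 = i then p.1 else p.2 ⟨j, mem_of_mem_insert_of_ne j.2 hj⟩)
    ?_).symm
  funext y j
  simp only [joinFamily, Function.comp_apply]
  split_ifs with hj
  · rw [hj]
  · rfl

lemma isPolymatroid_condEnt_joinFamily [IsFiniteMeasure ν] (hm : m ≤ mY)
    (hf : ∀ i a, MeasurableSet (f i ⁻¹' {a})) :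
    IsPolymatroid fun S => condEnt ν m (joinFamily f S) where
  map_empty := condEnt_of_subsingleton hm
  mono S T hST :=
    condEnt_comp_le hm (measurableSet_joinFamily_preimage hf T) fun p (j : S) => p ⟨j, hST j.2⟩
  diminishing_returns i S T hTS := by
    have hpair : ∀ x, MeasurableSet ((fun y => (f i y, joinFamily f S y)) ⁻¹' {x}) :=
      measurableSet_comp_preimage_singleton (measurableSet_joinFamily_preimage hf (insert i S))
        fun p : ↥(insert i S) → A =>
          (p ⟨i, mem_insert_self i S⟩, fun j : S => p ⟨j, mem_insert_of_mem j.2⟩)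
    have ssa := condEnt_add_condEnt_le (ν := ν) hm hpair fun (p : S → A) (j : T) => p ⟨j, hTS j.2⟩
    change _ + condEnt ν m (joinFamily f T)
      ≤ condEnt ν m (fun y => (f i y, joinFamily f T y)) + condEnt ν m (joinFamily f S) at ssa
    simp only [condEnt_joinFamily_insert hm hf]
    linarith

lemma condEnt_joinFamily_le [IsProbabilityMeasure ν] (hm : m ≤ mY)
    (hf : ∀ i a, MeasurableSet (f i ⁻¹' {a})) (S : Finset ι) :
    condEnt ν m (joinFamily f S) ≤ #S * log (Fintype.card A) := by
  have := condEnt_le_log_card (ν := ν) hm (measurableSet_joinFamily_preimage hf S)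
  rwa [Fintype.card_fun, Fintype.card_coe, Nat.cast_pow, log_pow] at this

end Join

lemma card_le_card_filter_mem_image_mul {G : Type*} [Group G] [DecidableEq G] {E F : Finset G}
    {x : G} (hx : ∀ e ∈ E, e⁻¹ * x ∈ F) : #E ≤ #{g ∈ F | x ∈ E.image fun e => e * g} :=
  card_le_card_of_injOn (fun e => e⁻¹ * x)
    (fun e he => mem_filter.2 ⟨hx e he, mem_image.2 ⟨e, he, mul_inv_cancel_left e x⟩⟩)
    (fun _ _ _ _ h => inv_injective (mul_right_cancel h))

theorem stmt9_general {Y G : Type*} [Group G] [DecidableEq G] [MulAction G Y]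
    (m : MeasurableSpace Y) [mY : MeasurableSpace Y] (hm : m ≤ mY)
    (ν : Measure Y) [IsProbabilityMeasure ν]
    (hact : ∀ g : G, Measurable fun y : Y => g • y)
    {A : Type*} [Fintype A] [MeasurableSpace A] [MeasurableSingletonClass A]
    (α : Y → A) (hα : Measurable α)
    (E F : Finset G) (hE : E.Nonempty) :
    condEnt ν m (joinMap α F) ≤
      (∑ g ∈ F, ((E.card : ℝ))⁻¹ * condEnt ν m (joinMap α (E.image (fun x => x * g))))
        + ((F.filter fun g => ¬ ∀ e ∈ E, e⁻¹ * g ∈ F).card : ℝ)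
            * Real.log (Fintype.card A) := by
  set f : G → Y → A := fun g y => α (g • y)
  have hf : ∀ g a, MeasurableSet (f g ⁻¹' {a}) := fun g a =>
    (hα.comp (hact g)) (measurableSet_singleton a)
  set H : Finset G → ℝ := fun S => condEnt ν m (joinFamily f S)
  have hH : IsPolymatroid H := isPolymatroid_condEnt_joinFamily hm hf
  set F' := F.filter fun g => ∀ e ∈ E, e⁻¹ * g ∈ F
  have shearer : #E * H F' ≤ ∑ g ∈ F, H (E.image fun x => x * g) :=
    hH.card_mul_le_sum F _ F' fun x hx => card_le_card_filter_mem_image_mul (mem_filter.1 hx).2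
  have union : H F ≤ H F' + #(F \ F') * log (Fintype.card A) := by
    have := hH.union_le_add_card_mul F' (F \ F') fun g _ => by
      simpa using condEnt_joinFamily_le hm hf {g}
    rwa [union_sdiff_of_subset (filter_subset _ F)] at this
  have hEpos : (0 : ℝ) < #E := by exact_mod_cast hE.card_pos
  have hF' : H F' ≤ (#E : ℝ)⁻¹ * ∑ g ∈ F, H (E.image fun x => x * g) := by
    rw [inv_mul_eq_div, le_div_iff₀ hEpos]
    linarith
  rw [filter_not, ← mul_sum]
  exact union.trans (add_le_add_left hF' _)

/-- for a group `G` acting by invertible measurable (not necessarily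
measure-preserving) transformations on a probability space `(Y, mY, ν)`, a
sub-σ-algebra `m ≤ mY`, a finite measurable partition `α` (with `|α| = card A`
atoms), and nonempty finite `E, F ⊆ G`:
`H_ν(α_F|m) ≤ ∑_{g∈F} |E|⁻¹ H_ν(α_{Eg}|m) + |F \ {g : E⁻¹g ⊆ F}| · log |α|`. -/
theorem stmt9 {Y G : Type*} [Group G] [DecidableEq G] [MulAction G Y]
    (m : MeasurableSpace Y) [mY : MeasurableSpace Y] (hm : m ≤ mY)
    (ν : Measure Y) [IsProbabilityMeasure ν]
    (hact : ∀ g : G, Measurable fun y : Y => g • y)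
    {A : Type*} [Fintype A] [MeasurableSpace A] [MeasurableSingletonClass A]
    (α : Y → A) (hα : Measurable α)
    (E F : Finset G) (hE : E.Nonempty) (hF : F.Nonempty) :
    condEnt ν m (joinMap α F) ≤
      (∑ g ∈ F, ((E.card : ℝ))⁻¹ * condEnt ν m (joinMap α (E.image (fun x => x * g))))
        + ((F.filter fun g => ¬ ∀ e ∈ E, e⁻¹ * g ∈ F).card : ℝ)
            * Real.log (Fintype.card A) :=
  stmt9_general m (mY := mY) hm ν hact α hα E F hE
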